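/- arXiv:1104.5648 — 3 statements merged into one kernel-verified Lean document; each statement's English description precedes it below -/
import Mathlib

section
/- For any D₀, E₀ > 0 there exist constants R > 1 > r₀ > 0 depending only on D₀, E₀ such that for every g ∈ U(D₀,E₀) and every v₀ ∈ ℝ³, the truncated function χ_{B₀(R,r₀)} g belongs to U(D₀/2, E₀), where B₀(R,r₀) = {v ∈ ℝ³ : |v| ≤ R and |v−v₀| ≥ r₀} and χ_A denotes the characteristic function of the set A. -/
open MeasureTheory Real Set Filter Metric
open scoped ENNReal

noncomputable section

/-- Velocity space ℝ³. -/
abbrev V3 : Type := EuclideanSpace ℝ (Fin 3)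

/-- The unit sphere S² in ℝ³. -/
abbrev Sph : Type := Metric.sphere (0 : V3) 1

/-- The surface measure on the unit sphere S². -/
def sphM : Measure Sph := Measure.toSphere (volume : Measure V3)

/-- Post-collisional velocity v' = (v+v∗)/2 + (|v−v∗|/2)σ. -/
def vP (v vs : V3) (σ : Sph) : V3 :=
  (2:ℝ)⁻¹ • (v + vs) + ((2:ℝ)⁻¹ * ‖v - vs‖) • (σ : V3)

/-- Post-collisional velocity v'∗ = (v+v∗)/2 − (|v−v∗|/2)σ. -/
def vsP (v vs : V3) (σ : Sph) : V3 :=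
  (2:ℝ)⁻¹ • (v + vs) - ((2:ℝ)⁻¹ * ‖v - vs‖) • (σ : V3)

/-- cos θ = ((v−v∗)/|v−v∗|) · σ. -/
def cosTh (v vs : V3) (σ : Sph) : ℝ := inner ℝ (‖v - vs‖⁻¹ • (v - vs)) (σ : V3)

/-- Angular singularity condition: b ≥ 0, b vanishes for θ > π/2, and
    b(cos θ) θ^{2+2s} → K > 0 as θ → 0+. -/
def angCond (b : ℝ → ℝ) (s K : ℝ) : Prop :=
  0 < K ∧ (∀ x, 0 ≤ b x) ∧ (∀ x < (0:ℝ), b x = 0) ∧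
    Tendsto (fun θ : ℝ => b (Real.cos θ) * θ ^ (2 + 2*s))
      (nhdsWithin 0 (Set.Ioi 0)) (nhds K)

/-- The collision kernel B(v−v∗,σ) = |v−v∗|^γ b(cos θ). -/
def kerB (γ : ℝ) (b : ℝ → ℝ) (v vs : V3) (σ : Sph) : ℝ :=
  ‖v - vs‖ ^ γ * b (cosTh v vs σ)

/-- The Boltzmann collision operator Q(g,f). -/
def Qop (γ : ℝ) (b : ℝ → ℝ) (g f : V3 → ℝ) (v : V3) : ℝ :=
  ∫ vs, ∫ σ, kerB γ b v vs σ * (g (vsP v vs σ) * f (vP v vs σ) - g vs * f v) ∂sphM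

/-- Japanese bracket ⟨v⟩ = (1+|v|²)^{1/2}. -/
def jpn (v : V3) : ℝ := (1 + ‖v‖^2) ^ ((1:ℝ)/2)

/-- Weighted L¹ norm ‖f‖_{L¹_ℓ} = ∫ (1+|v|)^ℓ |f| dv. -/
def L1w (ℓ : ℝ) (f : V3 → ℝ) : ℝ := ∫ v, (1 + ‖v‖) ^ ℓ * |f v|

/-- ‖f‖_{L log L} = ∫ |f| log(1+|f|) dv. -/
def LlogL (f : V3 → ℝ) : ℝ := ∫ v, |f v| * Real.log (1 + |f v|)

/-- Weighted L^p norm ‖f‖_{L^p_ℓ} = (∫ (1+|v|)^{ℓp} |f|^p dv)^{1/p}. -/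
def Lpw (p ℓ : ℝ) (f : V3 → ℝ) : ℝ := (∫ v, (1 + ‖v‖) ^ (ℓ * p) * |f v| ^ p) ^ (1/p)

/-- Fourier transform of a real-valued function on ℝ³. -/
def FT (f : V3 → ℝ) : V3 → ℂ := FourierTransform.fourier (fun v => (f v : ℂ))

/-- Squared Sobolev norm ‖f‖²_{H^k} = ∫ ⟨ξ⟩^{2k} |f̂(ξ)|² dξ. -/
def HnormSq (k : ℝ) (f : V3 → ℝ) : ℝ := ∫ ξ, jpn ξ ^ (2*k) * ‖FT f ξ‖^2

/-- Sobolev norm ‖f‖_{H^k}. -/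
def Hnorm (k : ℝ) (f : V3 → ℝ) : ℝ := Real.sqrt (HnormSq k f)

/-- Weighted Sobolev norm ‖f‖_{H^k_ℓ} = ‖⟨v⟩^ℓ f‖_{H^k}. -/
def HnormW (k ℓ : ℝ) (f : V3 → ℝ) : ℝ := Hnorm k (fun v => jpn v ^ ℓ * f v)

/-- Squared weighted Sobolev norm as an element of [0,∞]. -/
def HnormSqE (k ℓ : ℝ) (f : V3 → ℝ) : ℝ≥0∞ :=
  ∫⁻ ξ, ENNReal.ofReal (jpn ξ ^ (2*k) * ‖FT (fun v => jpn v ^ ℓ * f v) ξ‖^2)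

/-- The set U(D₀,E₀) of nonnegative g with mass ≥ D₀ and ‖g‖_{L¹₂}+‖g‖_{LlogL} ≤ E₀. -/
def Uset (D0 E0 : ℝ) : Set (V3 → ℝ) :=
  {g | Measurable g ∧ (∀ v, 0 ≤ g v) ∧
       Integrable (fun v => (1 + ‖v‖) ^ (2:ℝ) * g v) ∧
       Integrable (fun v => g v * Real.log (1 + g v)) ∧
       D0 ≤ L1w 0 g ∧ L1w 2 g + LlogL g ≤ E0}

/-- Entropy dissipation functional D(g,g), an element of [0,∞]. -/
def eDiss (γ : ℝ) (b : ℝ → ℝ) (g : V3 → ℝ) : ℝ≥0∞ :=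
  ENNReal.ofReal (1/4) *
    ∫⁻ v, ∫⁻ vs, ∫⁻ σ, ENNReal.ofReal (kerB γ b v vs σ *
      ((g (vP v vs σ) * g (vsP v vs σ) - g v * g vs) *
       (Real.log (g (vP v vs σ) * g (vsP v vs σ)) - Real.log (g v * g vs)))) ∂sphM

/-- Weak solution of the Cauchy problem ∂ₜf = Q(f,f), f(0)=f₀. -/
structure WeakSol (γ s K : ℝ) (b : ℝ → ℝ) (f : ℝ → V3 → ℝ) (f₀ : V3 → ℝ) : Prop where
  ang : angCond b s K
  f0_nonneg : ∀ v, 0 ≤ f₀ v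
  f0_finite : Integrable (fun v => f₀ v * (1 + ‖v‖^2 + Real.log (1 + f₀ v)))
  nonneg : ∀ t v, 0 ≤ f t v
  meas : Measurable (Function.uncurry f)
  testCont : ∀ φ : V3 → ℝ, ContDiff ℝ (⊤ : ℕ∞) φ → HasCompactSupport φ →
    ContinuousOn (fun t => ∫ v, f t v * φ v) (Set.Ici 0)
  timeInt : ∀ T > (0:ℝ), IntegrableOn (fun t => L1w (2 + max γ 0) (f t)) (Set.Icc 0 T)
  init : f 0 = f₀
  mass : ∀ t ≥ (0:ℝ), ∫ v, f t v = ∫ v, f₀ v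
  momentum : ∀ t ≥ (0:ℝ), ∀ i : Fin 3, ∫ v, f t v * v i = ∫ v, f₀ v * v i
  energy : ∀ t ≥ (0:ℝ), ∫ v, f t v * ‖v‖^2 = ∫ v, f₀ v * ‖v‖^2
  entropy : ∀ t ≥ (0:ℝ), Integrable (fun v => f t v * Real.log (1 + f t v)) ∧
    ∫ v, f t v * Real.log (f t v) ≤ ∫ v, f₀ v * Real.log (f₀ v)
  weakEq : ∀ φ : ℝ → V3 → ℝ,
    (∀ t, ContDiff ℝ (⊤ : ℕ∞) (φ t)) → (∀ v, ContDiff ℝ 1 (fun t => φ t v)) →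
    (∃ Kc : Set V3, IsCompact Kc ∧ ∀ t, Function.support (φ t) ⊆ Kc) →
    ∀ t ≥ (0:ℝ),
      ((∫ v, f t v * φ t v) - (∫ v, f₀ v * φ 0 v)
        - ∫ τ in Set.Ioc (0:ℝ) t, ∫ v, f τ v * deriv (fun r => φ r v) τ)
      = ∫ τ in Set.Ioc (0:ℝ) t, (1/2 : ℝ) * ∫ v, ∫ vs, ∫ σ,
          kerB γ b v vs σ * f τ vs * f τ v *
            (φ τ (vP v vs σ) + φ τ (vsP v vs σ) - φ τ v - φ τ vs) ∂sphM

/-- f ∈ L^∞([t₀,T₁]; 𝒮(ℝ³)): f(t) coincides a.e. with a Schwartz function for every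
    t ∈ [t₀,T₁], with all Schwartz seminorms bounded uniformly in t. -/
def SmoothBdd (f : ℝ → V3 → ℝ) (t0 T1 : ℝ) : Prop :=
  ∃ F : ℝ → SchwartzMap V3 ℝ,
    (∀ t ∈ Set.Icc t0 T1, ∀ᵐ v ∂(volume : Measure V3), f t v = F t v) ∧
    ∀ k n : ℕ, ∃ C : ℝ, ∀ t ∈ Set.Icc t0 T1, SchwartzMap.seminorm ℝ k n (F t) ≤ C


set_option maxHeartbeats 1000000 in
/-- There are R > 1 > r₀ > 0 depending only on D₀, E₀ such that truncating any
    g ∈ U(D₀,E₀) to B₀(R,r₀) = {|v| ≤ R, |v−v₀| ≥ r₀} keeps it in U(D₀/2,E₀),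
    for every center v₀. -/
theorem truncation_stays_in_U (D0 E0 : ℝ) (hD0 : 0 < D0) (hE0 : 0 < E0) :
    ∃ R r0 : ℝ, 1 < R ∧ 0 < r0 ∧ r0 < 1 ∧
      ∀ g ∈ Uset D0 E0, ∀ v0 : V3,
        Set.indicator {v : V3 | ‖v‖ ≤ R ∧ r0 ≤ ‖v - v0‖} g ∈ Uset (D0/2) E0 := by
  have hc0 : (volume (Metric.ball (0:V3) 1)) < ⊤ := measure_ball_lt_top
  set c : ℝ := (volume (Metric.ball (0:V3) 1)).toReal with hcdef
  have hc_nn : 0 ≤ c := ENNReal.toReal_nonneg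
  set M : ℝ := Real.exp (8*E0/D0) with hMdef
  have hM0 : 0 < M := Real.exp_pos _
  set Bc : ℝ := M * c + 1 with hBcdef
  have hBc0 : 0 < Bc := by positivity
  set R : ℝ := max 2 (Real.sqrt (4*E0/D0)) with hRdef
  set r0 : ℝ := min (1/2) (D0/(8*Bc)) with hr0def
  have hR2 : (2:ℝ) ≤ R := le_max_left _ _
  have hR1 : 1 < R := lt_of_lt_of_le one_lt_two hR2
  have hr0pos : 0 < r0 := lt_min (by norm_num) (by positivity)
  have hr0lt1 : r0 < 1 := lt_of_le_of_lt (min_le_left _ _) (by norm_num)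
  have hr0le : r0 ≤ D0/(8*Bc) := min_le_right _ _
  -- log(1+M) bound
  have hlogM : 8*E0/D0 ≤ Real.log (1+M) := by
    have h1 : Real.log M ≤ Real.log (1+M) := Real.log_le_log hM0 (by linarith)
    rw [hMdef, Real.log_exp] at h1; exact h1
  have hlogM0 : 0 < Real.log (1+M) := lt_of_lt_of_le (by positivity) hlogM
  -- (1+R)^2 bound
  have hP0 : (0:ℝ) < (1+R)^(2:ℝ) := Real.rpow_pos_of_pos (by linarith) _
  have hRsq : 4*E0/D0 ≤ (1+R)^(2:ℝ) := by
    rw [Real.rpow_two]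
    have hs : Real.sqrt (4*E0/D0) ≤ R := le_max_right _ _
    have hs0 : 0 ≤ Real.sqrt (4*E0/D0) := Real.sqrt_nonneg _
    calc 4*E0/D0 = Real.sqrt (4*E0/D0) ^ 2 := (Real.sq_sqrt (by positivity)).symm
      _ ≤ (1+R)^2 := by nlinarith
  refine ⟨R, r0, hR1, hr0pos, hr0lt1, ?_⟩
  rintro g ⟨hmeas, hnn, hInt2, hIntL, hD, hE⟩ v0
  set S : Set V3 := {v : V3 | ‖v‖ ≤ R ∧ r0 ≤ ‖v - v0‖} with hSdef
  have hSm : MeasurableSet S := by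
    rw [hSdef, Set.setOf_and]
    exact (measurableSet_le measurable_norm measurable_const).inter
      (measurableSet_le measurable_const ((measurable_id.sub_const v0).norm))
  set h : V3 → ℝ := S.indicator g with hhdef
  have hh_meas : Measurable h := hmeas.indicator hSm
  have hh_nn : ∀ v, 0 ≤ h v := fun v => Set.indicator_nonneg (fun v _ => hnn v) v
  have hh_le : ∀ v, h v ≤ g v := fun v => Set.indicator_le_self' (fun v _ => hnn v) v
  -- basic integrability
  have hone_le : ∀ v : V3, (1:ℝ) ≤ (1+‖v‖)^(2:ℝ) := by
    intro v
    calc (1:ℝ) = (1:ℝ)^(2:ℝ) := (Real.one_rpow _).symm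
      _ ≤ (1+‖v‖)^(2:ℝ) := Real.rpow_le_rpow (by norm_num) (by linarith [norm_nonneg v]) (by norm_num)
  have hIntg : Integrable g := by
    refine hInt2.mono (hmeas.aestronglyMeasurable) (Filter.Eventually.of_forall fun v => ?_)
    have h1 : (0:ℝ) ≤ g v := hnn v
    have h2 := hone_le v
    simp only [Real.norm_eq_abs, abs_of_nonneg h1,
      abs_of_nonneg (mul_nonneg (le_trans zero_le_one h2) h1)]
    nlinarith
  have hInth : Integrable h := hIntg.indicator hSm
  -- identification of weighted integrands for h
  have e3 : (fun v => (1+‖v‖)^(2:ℝ) * h v) = S.indicator (fun v => (1+‖v‖)^(2:ℝ) * g v) := by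
    funext v
    by_cases hv : v ∈ S
    · simp [hhdef, Set.indicator_of_mem hv]
    · simp [hhdef, Set.indicator_of_notMem hv]
  have e4 : (fun v => h v * Real.log (1 + h v))
      = S.indicator (fun v => g v * Real.log (1 + g v)) := by
    funext v
    by_cases hv : v ∈ S
    · simp [hhdef, Set.indicator_of_mem hv]
    · simp [hhdef, Set.indicator_of_notMem hv]
  have hInt2h : Integrable (fun v => (1+‖v‖)^(2:ℝ) * h v) := by
    rw [e3]; exact hInt2.indicator hSm
  have hIntLh : Integrable (fun v => h v * Real.log (1 + h v)) := by
    rw [e4]; exact hIntL.indicator hSm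
  -- L1w identities
  have hL1w0g : L1w 0 g = ∫ v, g v := by
    unfold L1w
    simp only [Real.rpow_zero, one_mul]
    exact integral_congr_ae (Filter.Eventually.of_forall fun v => abs_of_nonneg (hnn v))
  have hL1w0h : L1w 0 h = ∫ v, h v := by
    unfold L1w
    simp only [Real.rpow_zero, one_mul]
    exact integral_congr_ae (Filter.Eventually.of_forall fun v => abs_of_nonneg (hh_nn v))
  have hL1w2g : L1w 2 g = ∫ v, (1+‖v‖)^(2:ℝ) * g v := by
    unfold L1w
    exact integral_congr_ae (Filter.Eventually.of_forall fun v => by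
      simp [abs_of_nonneg (hnn v)])
  have hL1w2h : L1w 2 h = ∫ v, (1+‖v‖)^(2:ℝ) * h v := by
    unfold L1w
    exact integral_congr_ae (Filter.Eventually.of_forall fun v => by
      simp [abs_of_nonneg (hh_nn v)])
  have hLlogLg : LlogL g = ∫ v, g v * Real.log (1 + g v) := by
    unfold LlogL
    exact integral_congr_ae (Filter.Eventually.of_forall fun v => by
      simp [abs_of_nonneg (hnn v)])
  have hLlogLh : LlogL h = ∫ v, h v * Real.log (1 + h v) := by
    unfold LlogL
    exact integral_congr_ae (Filter.Eventually.of_forall fun v => by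
      simp [abs_of_nonneg (hh_nn v)])
  -- nonnegativity of the two pieces of the energy
  have hL2g_nn : 0 ≤ L1w 2 g := by
    rw [hL1w2g]
    exact integral_nonneg fun v => mul_nonneg (Real.rpow_nonneg (by linarith [norm_nonneg v]) _) (hnn v)
  have hLlg_nn : 0 ≤ LlogL g := by
    rw [hLlogLg]
    exact integral_nonneg fun v => mul_nonneg (hnn v) (Real.log_nonneg (by linarith [hnn v]))
  have hL2gE : L1w 2 g ≤ E0 := by linarith
  have hLlgE : LlogL g ≤ E0 := by linarith
  -- the comparison function φ
  have hball : MeasurableSet (Metric.ball v0 r0) := measurableSet_ball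
  have hIndInt : Integrable ((Metric.ball v0 r0).indicator (fun _ => (1:ℝ))) :=
    (integrableOn_const (μ := volume) (s := Metric.ball v0 r0) (C := (1:ℝ)) measure_ball_lt_top.ne).integrable_indicator hball
  set φ : V3 → ℝ := fun v => ((1+R)^(2:ℝ))⁻¹ * ((1+‖v‖)^(2:ℝ) * g v)
      + (M * (Metric.ball v0 r0).indicator (fun _ => (1:ℝ)) v
         + (Real.log (1+M))⁻¹ * (g v * Real.log (1 + g v))) with hφdef
  have hφint : Integrable φ :=
    (hInt2.const_mul _).add ((hIndInt.const_mul M).add (hIntL.const_mul _))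
  have hIntc : Integrable (Sᶜ.indicator g) := hIntg.indicator hSm.compl
  have hpt : ∀ v, Sᶜ.indicator g v ≤ φ v := by
    intro v
    have tA_nn : 0 ≤ ((1+R)^(2:ℝ))⁻¹ * ((1+‖v‖)^(2:ℝ) * g v) :=
      mul_nonneg (inv_nonneg.2 hP0.le)
        (mul_nonneg (Real.rpow_nonneg (by linarith [norm_nonneg v]) _) (hnn v))
    have tB_nn : 0 ≤ M * (Metric.ball v0 r0).indicator (fun _ => (1:ℝ)) v :=
      mul_nonneg hM0.le (Set.indicator_nonneg (fun _ _ => zero_le_one) v)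
    have tC_nn : 0 ≤ (Real.log (1+M))⁻¹ * (g v * Real.log (1 + g v)) :=
      mul_nonneg (inv_nonneg.2 hlogM0.le)
        (mul_nonneg (hnn v) (Real.log_nonneg (by linarith [hnn v])))
    by_cases hv : v ∈ S
    · rw [Set.indicator_of_notMem (Set.notMem_compl_iff.2 hv)]
      simp only [hφdef]; linarith
    · rw [Set.indicator_of_mem (Set.mem_compl hv)]
      simp only [hSdef, Set.mem_setOf_eq, not_and, not_le] at hv
      by_cases hvR : ‖v‖ ≤ R
      · -- v is in the small ball
        have hb : v ∈ Metric.ball v0 r0 := by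
          rw [Metric.mem_ball, dist_eq_norm]; exact hv hvR
        have hind : (Metric.ball v0 r0).indicator (fun _ => (1:ℝ)) v = 1 :=
          Set.indicator_of_mem hb _
        by_cases hgM : g v ≤ M
        · simp only [hφdef, hind]; linarith
        · push_neg at hgM
          have hloglog : Real.log (1+M) ≤ Real.log (1 + g v) :=
            Real.log_le_log (by linarith) (by linarith)
          have h1 : g v * Real.log (1+M) ≤ g v * Real.log (1 + g v) :=
            mul_le_mul_of_nonneg_left hloglog (hnn v)
          have h2 : g v = (Real.log (1+M))⁻¹ * (g v * Real.log (1+M)) := by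
            field_simp
          have h3 : g v ≤ (Real.log (1+M))⁻¹ * (g v * Real.log (1 + g v)) := by
            conv_lhs => rw [h2]
            exact mul_le_mul_of_nonneg_left h1 (inv_nonneg.2 hlogM0.le)
          simp only [hφdef]; linarith
      · push_neg at hvR
        have hle : (1+R)^(2:ℝ) ≤ (1+‖v‖)^(2:ℝ) :=
          Real.rpow_le_rpow (by linarith) (by linarith) (by norm_num)
        have h1 : (1+R)^(2:ℝ) * g v ≤ (1+‖v‖)^(2:ℝ) * g v :=
          mul_le_mul_of_nonneg_right hle (hnn v)
        have h2 : g v = ((1+R)^(2:ℝ))⁻¹ * ((1+R)^(2:ℝ) * g v) := by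
          field_simp
        have h3 : g v ≤ ((1+R)^(2:ℝ))⁻¹ * ((1+‖v‖)^(2:ℝ) * g v) := by
          conv_lhs => rw [h2]
          exact mul_le_mul_of_nonneg_left h1 (inv_nonneg.2 hP0.le)
        simp only [hφdef]; linarith
  have hmono : ∫ v, Sᶜ.indicator g v ≤ ∫ v, φ v := integral_mono hIntc hφint hpt
  -- compute ∫ φ
  have hφeq : ∫ v, φ v = ((1+R)^(2:ℝ))⁻¹ * (∫ v, (1+‖v‖)^(2:ℝ) * g v)
      + (M * (volume (Metric.ball v0 r0)).toReal
         + (Real.log (1+M))⁻¹ * ∫ v, g v * Real.log (1 + g v)) := by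
    have hB : Integrable (fun v => M * (Metric.ball v0 r0).indicator (fun _ => (1:ℝ)) v) :=
      hIndInt.const_mul M
    have hC : Integrable (fun v => (Real.log (1+M))⁻¹ * (g v * Real.log (1 + g v))) :=
      hIntL.const_mul _
    have hBC : Integrable (fun v => M * (Metric.ball v0 r0).indicator (fun _ => (1:ℝ)) v
        + (Real.log (1+M))⁻¹ * (g v * Real.log (1 + g v))) := hB.add hC
    simp only [hφdef]
    rw [integral_add (hInt2.const_mul _) hBC]
    rw [integral_add hB hC]
    rw [integral_const_mul, integral_const_mul, integral_const_mul]
    rw [integral_indicator_const (1:ℝ) hball]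
    simp [smul_eq_mul, Measure.real]
  -- bound the three terms
  have hT1 : ((1+R)^(2:ℝ))⁻¹ * (∫ v, (1+‖v‖)^(2:ℝ) * g v) ≤ D0/4 := by
    have hI : ∫ v, (1+‖v‖)^(2:ℝ) * g v ≤ E0 := by rw [← hL1w2g]; exact hL2gE
    have hI0 : 0 ≤ ∫ v, (1+‖v‖)^(2:ℝ) * g v := by rw [← hL1w2g]; exact hL2g_nn
    have h1 : ((1+R)^(2:ℝ))⁻¹ * (∫ v, (1+‖v‖)^(2:ℝ) * g v) ≤ ((1+R)^(2:ℝ))⁻¹ * E0 :=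
      mul_le_mul_of_nonneg_left hI (inv_nonneg.2 hP0.le)
    have h2 : ((1+R)^(2:ℝ))⁻¹ * E0 ≤ D0/4 := by
      rw [inv_mul_le_iff₀ hP0]
      have : (4*E0/D0) * (D0/4) ≤ (1+R)^(2:ℝ) * (D0/4) :=
        mul_le_mul_of_nonneg_right hRsq (by positivity)
      calc E0 = (4*E0/D0) * (D0/4) := by field_simp <;> ring
        _ ≤ (1+R)^(2:ℝ) * (D0/4) := this
    linarith
  have hT2a : M * (volume (Metric.ball v0 r0)).toReal ≤ D0/8 := by
    have hvol : (volume (Metric.ball v0 r0)).toReal = r0^3 * c := by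
      rw [Measure.addHaar_ball volume v0 hr0pos.le, ENNReal.toReal_mul,
        ENNReal.toReal_ofReal (by positivity), finrank_euclideanSpace_fin]
    rw [hvol]
    have hr3 : r0^3 ≤ r0 := by
      simpa using pow_le_pow_of_le_one hr0pos.le hr0lt1.le (by norm_num : 1 ≤ 3)
    have hMc : M * c ≤ Bc := by rw [hBcdef]; linarith
    calc M * (r0^3 * c) = (M * c) * r0^3 := by ring
      _ ≤ (M * c) * r0 := mul_le_mul_of_nonneg_left hr3 (mul_nonneg hM0.le hc_nn)
      _ ≤ Bc * r0 := mul_le_mul_of_nonneg_right hMc hr0pos.le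
      _ ≤ Bc * (D0/(8*Bc)) := mul_le_mul_of_nonneg_left hr0le hBc0.le
      _ = D0/8 := by field_simp <;> ring
  have hT2b : (Real.log (1+M))⁻¹ * (∫ v, g v * Real.log (1 + g v)) ≤ D0/8 := by
    have hI : ∫ v, g v * Real.log (1 + g v) ≤ E0 := by rw [← hLlogLg]; exact hLlgE
    have hI0 : 0 ≤ ∫ v, g v * Real.log (1 + g v) := by rw [← hLlogLg]; exact hLlg_nn
    have h1 : (Real.log (1+M))⁻¹ * (∫ v, g v * Real.log (1 + g v))
        ≤ (Real.log (1+M))⁻¹ * E0 :=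
      mul_le_mul_of_nonneg_left hI (inv_nonneg.2 hlogM0.le)
    have h2 : (Real.log (1+M))⁻¹ * E0 ≤ D0/8 := by
      rw [inv_mul_le_iff₀ hlogM0]
      have : (8*E0/D0) * (D0/8) ≤ Real.log (1+M) * (D0/8) :=
        mul_le_mul_of_nonneg_right hlogM (by positivity)
      calc E0 = (8*E0/D0) * (D0/8) := by field_simp <;> ring
        _ ≤ Real.log (1+M) * (D0/8) := this
    linarith
  -- mass decomposition
  have hdecomp : ∫ v, g v = (∫ v, h v) + ∫ v, Sᶜ.indicator g v := by
    rw [← integral_add hInth hIntc]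
    refine integral_congr_ae (Filter.Eventually.of_forall fun v => ?_)
    have := congrFun (Set.indicator_self_add_compl S g) v
    exact this.symm
  have hmass : D0/2 ≤ L1w 0 h := by
    have hgD : D0 ≤ ∫ v, g v := by rw [← hL1w0g]; exact hD
    rw [hL1w0h]
    have : ∫ v, Sᶜ.indicator g v ≤ D0/4 + (D0/8 + D0/8) := by
      refine le_trans hmono ?_
      rw [hφeq]; linarith
    linarith
  -- final assembly
  refine ⟨hh_meas, hh_nn, hInt2h, hIntLh, hmass, ?_⟩
  have hb2 : L1w 2 h ≤ L1w 2 g := by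
    rw [hL1w2h, hL1w2g]
    refine integral_mono hInt2h hInt2 fun v => ?_
    exact mul_le_mul_of_nonneg_left (hh_le v) (Real.rpow_nonneg (by linarith [norm_nonneg v]) _)
  have hbl : LlogL h ≤ LlogL g := by
    rw [hLlogLh, hLlogLg]
    refine integral_mono hIntLh hIntL fun v => ?_
    by_cases hv : v ∈ S
    · simp [hhdef, Set.indicator_of_mem hv]
    · simp only [hhdef, Set.indicator_of_notMem hv]
      simp only [zero_mul]
      exact mul_nonneg (hnn v) (Real.log_nonneg (by linarith [hnn v]))
  linarith

end
end

section
/- Let D₀, E₀ > 0 and let g : ℝ³ → [0,∞) be measurable with ∫_{ℝ³} g dv ≥ D₀ and ∫_{ℝ³}(1+|v|)² g dv + ∫_{ℝ³} g log(1+g) dv ≤ E₀. If R ≥ 2√(2E₀/D₀) and M > 0 satisfies log(1+M) ≥ 8E₀/D₀, then ∫_{{|v| ≤ R} ∩ {g ≤ M}} g dv ≥ 3D₀/4. -/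
open MeasureTheory Real Set Filter Metric
open scoped ENNReal

noncomputable section

/-- If g ≥ 0 has mass ≥ D₀ and ∫(1+|v|)²g + ∫ g log(1+g) ≤ E₀, then for
    R ≥ 2√(2E₀/D₀) and log(1+M) ≥ 8E₀/D₀ one has ∫_{{|v|≤R}∩{g≤M}} g ≥ 3D₀/4. -/
theorem truncated_mass_lower_bound
    (D0 E0 R M : ℝ) (hD0 : 0 < D0) (hE0 : 0 < E0)
    (g : V3 → ℝ) (hmeas : Measurable g) (hpos : ∀ v, 0 ≤ g v)
    (hmass : ENNReal.ofReal D0 ≤ ∫⁻ v, ENNReal.ofReal (g v))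
    (hbound : (∫⁻ v, ENNReal.ofReal ((1 + ‖v‖)^2 * g v)) +
        (∫⁻ v, ENNReal.ofReal (g v * Real.log (1 + g v))) ≤ ENNReal.ofReal E0)
    (hR : 2 * Real.sqrt (2*E0/D0) ≤ R) (hM : 0 < M)
    (hlogM : 8*E0/D0 ≤ Real.log (1+M)) :
    ENNReal.ofReal (3*D0/4) ≤
      ∫⁻ v in {v : V3 | ‖v‖ ≤ R ∧ g v ≤ M}, ENNReal.ofReal (g v) := by
  set A : Set V3 := {v : V3 | ‖v‖ ≤ R ∧ g v ≤ M} with hA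
  have hAm : MeasurableSet A := by
    have : A = {v : V3 | ‖v‖ ≤ R} ∩ {v : V3 | g v ≤ M} := rfl
    rw [this]
    exact (measurableSet_le measurable_norm measurable_const).inter
      (measurableSet_le hmeas measurable_const)
  have hRpos : 0 < R := lt_of_lt_of_le (by positivity) hR
  have hR2 : (0:ℝ) < R ^ 2 := by positivity
  have hLpos : (0:ℝ) < Real.log (1 + M) := lt_of_lt_of_le (by positivity) hlogM
  have hE1 : (∫⁻ v, ENNReal.ofReal ((1 + ‖v‖)^2 * g v)) ≤ ENNReal.ofReal E0 :=
    le_trans le_self_add hbound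
  have hE2 : (∫⁻ v, ENNReal.ofReal (g v * Real.log (1 + g v))) ≤ ENNReal.ofReal E0 :=
    le_trans le_add_self hbound
  -- Bound on the large-velocity set
  have hS1 : (∫⁻ v in {v : V3 | R < ‖v‖}, ENNReal.ofReal (g v)) ≤ ENNReal.ofReal (D0/8) := by
    have hmono : ∀ v ∈ {v : V3 | R < ‖v‖}, ENNReal.ofReal (g v) ≤
        ENNReal.ofReal ((R^2)⁻¹) * ENNReal.ofReal ((1 + ‖v‖)^2 * g v) := by
      intro v hv
      rw [← ENNReal.ofReal_mul (by positivity)]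
      apply ENNReal.ofReal_le_ofReal
      have h1 : R ≤ 1 + ‖v‖ := by
        have hv' : R < ‖v‖ := hv
        nlinarith [norm_nonneg v]
      have h2 : R ^ 2 ≤ (1 + ‖v‖)^2 := by nlinarith [norm_nonneg v]
      rw [inv_mul_eq_div, le_div_iff₀ hR2]
      nlinarith [hpos v]
    calc (∫⁻ v in {v : V3 | R < ‖v‖}, ENNReal.ofReal (g v))
        ≤ ∫⁻ v in {v : V3 | R < ‖v‖},
            ENNReal.ofReal ((R^2)⁻¹) * ENNReal.ofReal ((1 + ‖v‖)^2 * g v) := by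
          exact setLIntegral_mono (by
            exact (measurable_const.mul
              (((measurable_const.add measurable_norm).pow_const 2).mul hmeas).ennreal_ofReal))
            hmono
      _ = ENNReal.ofReal ((R^2)⁻¹) * ∫⁻ v in {v : V3 | R < ‖v‖},
            ENNReal.ofReal ((1 + ‖v‖)^2 * g v) := by
          exact lintegral_const_mul _
            (((measurable_const.add measurable_norm).pow_const 2).mul hmeas).ennreal_ofReal
      _ ≤ ENNReal.ofReal ((R^2)⁻¹) * ENNReal.ofReal E0 := by
          gcongr
          exact le_trans (setLIntegral_le_lintegral _ _) hE1
      _ = ENNReal.ofReal ((R^2)⁻¹ * E0) := by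
          rw [ENNReal.ofReal_mul (by positivity)]
      _ ≤ ENNReal.ofReal (D0/8) := by
          apply ENNReal.ofReal_le_ofReal
          rw [inv_mul_eq_div, div_le_div_iff₀ hR2 (by norm_num : (0:ℝ) < 8)]
          have hs : Real.sqrt (2*E0/D0)^2 = 2*E0/D0 := Real.sq_sqrt (by positivity)
          have h5 : (2*Real.sqrt (2*E0/D0))^2 ≤ R^2 :=
            pow_le_pow_left₀ (by positivity) hR 2
          have h4 : 8*E0/D0 ≤ R^2 := by
            calc 8*E0/D0 = 2^2*(2*E0/D0) := by ring
              _ ≤ R^2 := by rw [mul_pow, hs] at h5; exact h5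
          rw [div_le_iff₀ hD0] at h4
          nlinarith
  -- Bound on the large-value set
  have hS2 : (∫⁻ v in {v : V3 | M < g v}, ENNReal.ofReal (g v)) ≤ ENNReal.ofReal (D0/8) := by
    have hmono : ∀ v ∈ {v : V3 | M < g v}, ENNReal.ofReal (g v) ≤
        ENNReal.ofReal ((Real.log (1+M))⁻¹) * ENNReal.ofReal (g v * Real.log (1 + g v)) := by
      intro v hv
      rw [← ENNReal.ofReal_mul (by positivity)]
      apply ENNReal.ofReal_le_ofReal
      have h1 : Real.log (1 + M) ≤ Real.log (1 + g v) := by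
        apply Real.log_le_log (by linarith)
        simp only [Set.mem_setOf_eq] at hv
        linarith
      rw [inv_mul_eq_div, le_div_iff₀ hLpos]
      nlinarith [hpos v]
    calc (∫⁻ v in {v : V3 | M < g v}, ENNReal.ofReal (g v))
        ≤ ∫⁻ v in {v : V3 | M < g v},
            ENNReal.ofReal ((Real.log (1+M))⁻¹) * ENNReal.ofReal (g v * Real.log (1 + g v)) := by
          exact setLIntegral_mono (by
            exact (measurable_const.mul
              ((hmeas.mul ((measurable_const.add hmeas).log)).ennreal_ofReal)))
            hmono
      _ = ENNReal.ofReal ((Real.log (1+M))⁻¹) * ∫⁻ v in {v : V3 | M < g v},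
            ENNReal.ofReal (g v * Real.log (1 + g v)) := by
          exact lintegral_const_mul _
            (hmeas.mul ((measurable_const.add hmeas).log)).ennreal_ofReal
      _ ≤ ENNReal.ofReal ((Real.log (1+M))⁻¹) * ENNReal.ofReal E0 := by
          gcongr
          exact le_trans (setLIntegral_le_lintegral _ _) hE2
      _ = ENNReal.ofReal ((Real.log (1+M))⁻¹ * E0) := by
          rw [ENNReal.ofReal_mul (by positivity)]
      _ ≤ ENNReal.ofReal (D0/8) := by
          apply ENNReal.ofReal_le_ofReal
          rw [inv_mul_eq_div, div_le_div_iff₀ hLpos (by norm_num : (0:ℝ) < 8)]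
          have h4 := (div_le_iff₀ hD0).mp hlogM
          nlinarith
  -- Complement bound
  have hcompl : (∫⁻ v in Aᶜ, ENNReal.ofReal (g v)) ≤ ENNReal.ofReal (D0/4) := by
    have hsub : Aᶜ ⊆ {v : V3 | R < ‖v‖} ∪ {v : V3 | M < g v} := by
      intro v hv
      simp only [hA, Set.mem_compl_iff, Set.mem_setOf_eq, not_and_or, not_le] at hv
      rcases hv with h | h
      · exact Or.inl h
      · exact Or.inr h
    calc (∫⁻ v in Aᶜ, ENNReal.ofReal (g v))
        ≤ ∫⁻ v in {v : V3 | R < ‖v‖} ∪ {v : V3 | M < g v}, ENNReal.ofReal (g v) :=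
          lintegral_mono_set hsub
      _ ≤ (∫⁻ v in {v : V3 | R < ‖v‖}, ENNReal.ofReal (g v)) +
          (∫⁻ v in {v : V3 | M < g v}, ENNReal.ofReal (g v)) := lintegral_union_le _ _ _
      _ ≤ ENNReal.ofReal (D0/8) + ENNReal.ofReal (D0/8) := add_le_add hS1 hS2
      _ = ENNReal.ofReal (D0/4) := by
          rw [← ENNReal.ofReal_add (by positivity) (by positivity)]
          ring_nf
  have hsplit : (∫⁻ v in A, ENNReal.ofReal (g v)) + (∫⁻ v in Aᶜ, ENNReal.ofReal (g v))
      = ∫⁻ v, ENNReal.ofReal (g v) := lintegral_add_compl _ hAm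
  rw [← ENNReal.add_le_add_iff_right (show ENNReal.ofReal (D0/4) ≠ ⊤ from ENNReal.ofReal_ne_top)]
  calc ENNReal.ofReal (3*D0/4) + ENNReal.ofReal (D0/4)
      = ENNReal.ofReal D0 := by
        rw [← ENNReal.ofReal_add (by positivity) (by positivity)]; ring_nf
    _ ≤ ∫⁻ v, ENNReal.ofReal (g v) := hmass
    _ = (∫⁻ v in A, ENNReal.ofReal (g v)) + (∫⁻ v in Aᶜ, ENNReal.ofReal (g v)) := hsplit.symm
    _ ≤ (∫⁻ v in A, ENNReal.ofReal (g v)) + ENNReal.ofReal (D0/4) := by gcongr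

end
end

section
/- Let λ, N₀ ∈ ℝ. For every multi-index α ∈ ℕ³ there exists a constant C_α > 0, depending only on α, λ, N₀ (and independent of δ), such that for all δ ∈ (0,1] and all ξ ∈ ℝ³: |∂_ξ^α M_λ^δ(ξ)| ≤ C_α M_λ^δ(ξ) ⟨ξ⟩^{−|α|}. -/
open MeasureTheory Real Set Filter Metric
open scoped ENNReal

noncomputable section

/-- The mollified symbol M_λ^δ(ξ) = ⟨ξ⟩^λ (1+δ⟨ξ⟩)^{−N₀}. -/
def Msym (lam N0 δ : ℝ) (ξ : V3) : ℝ := jpn ξ ^ lam / (1 + δ * jpn ξ) ^ N0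

/-- Partial derivative in the i-th coordinate direction. -/
def pd (i : Fin 3) (f : V3 → ℝ) : V3 → ℝ :=
  fun ξ => fderiv ℝ f ξ (EuclideanSpace.single i 1)

/-- Iterated partial derivative ∂^α, where the multi-index α is encoded as the list of
    coordinate directions in which one differentiates (|α| = length of the list). -/
def pdMulti : List (Fin 3) → (V3 → ℝ) → (V3 → ℝ)
  | [], f => f
  | i :: l, f => pd i (pdMulti l f)

/-! ### Auxiliary symbolic calculus -/

/-- A symbolic term `c · ξ^β · u^ν · δ^k (1+δ√u)^{-(N0+k)}` where `u = 1+|ξ|²`. -/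
structure MTerm where
  c : ℝ
  β : Fin 3 → ℕ
  ν : ℝ
  k : ℕ

def uu (ξ : V3) : ℝ := 1 + ∑ i, ξ i ^ 2

lemma uu_pos (ξ : V3) : 0 < uu ξ := by
  have : (0:ℝ) ≤ ∑ i, ξ i ^ 2 := Finset.sum_nonneg fun i _ => sq_nonneg _
  unfold uu; linarith

lemma uu_eq (ξ : V3) : uu ξ = 1 + ‖ξ‖^2 := by
  have : ‖ξ‖ = Real.sqrt (∑ i, ξ i ^ 2) := by
    simpa using EuclideanSpace.norm_eq ξ
  rw [uu, this, Real.sq_sqrt (Finset.sum_nonneg fun i _ => sq_nonneg _)]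

lemma jpn_eq (ξ : V3) : jpn ξ = uu ξ ^ ((1:ℝ)/2) := by rw [jpn, uu_eq]

lemma jpn_pos (ξ : V3) : 0 < jpn ξ := by
  rw [jpn_eq]; exact Real.rpow_pos_of_pos (uu_pos ξ) _

lemma one_le_jpn (ξ : V3) : 1 ≤ jpn ξ := by
  rw [jpn_eq]
  have h1 : (1:ℝ) ≤ uu ξ := by
    have : (0:ℝ) ≤ ∑ i, ξ i ^ 2 := Finset.sum_nonneg fun i _ => sq_nonneg _
    unfold uu; linarith
  calc (1:ℝ) = 1 ^ ((1:ℝ)/2) := by simp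
  _ ≤ uu ξ ^ ((1:ℝ)/2) := Real.rpow_le_rpow (by norm_num) h1 (by norm_num)

def evalT (N0 : ℝ) (t : MTerm) (δ : ℝ) (ξ : V3) : ℝ :=
  t.c * (∏ i, ξ i ^ t.β i) * uu ξ ^ t.ν *
    (δ ^ t.k * (1 + δ * uu ξ ^ ((1:ℝ)/2)) ^ (-(N0 + (t.k : ℝ))))

def evalE (N0 : ℝ) : List MTerm → ℝ → V3 → ℝ
  | [], _, _ => 0
  | t :: E, δ, ξ => evalT N0 t δ ξ + evalE N0 E δ ξ

/-- Symbolic derivative of a term in direction `j`. -/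
def dT (N0 : ℝ) (j : Fin 3) (t : MTerm) : List MTerm :=
  [ ⟨t.c * t.β j, fun i => if i = j then t.β i - 1 else t.β i, t.ν, t.k⟩,
    ⟨t.c * (2 * t.ν), fun i => if i = j then t.β i + 1 else t.β i, t.ν - 1, t.k⟩,
    ⟨t.c * (-(N0 + (t.k : ℝ))), fun i => if i = j then t.β i + 1 else t.β i,
      t.ν - 1/2, t.k + 1⟩ ]

def dE (N0 : ℝ) (j : Fin 3) : List MTerm → List MTerm
  | [] => []
  | t :: E => dT N0 j t ++ dE N0 j E

def iterE (lam N0 : ℝ) : List (Fin 3) → List MTerm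
  | [] => [⟨1, fun _ => 0, lam/2, 0⟩]
  | j :: l => dE N0 j (iterE lam N0 l)

/-! ### Product identities -/

lemma prodA (ξ : V3) (β : Fin 3 → ℕ) (j : Fin 3) :
    (∏ i, ξ i ^ (if i = j then β i + 1 else β i)) = ξ j * ∏ i, ξ i ^ β i := by
  rw [← Finset.mul_prod_erase Finset.univ _ (Finset.mem_univ j),
      ← Finset.mul_prod_erase Finset.univ (fun i => ξ i ^ β i) (Finset.mem_univ j)]
  have herase : (∏ i ∈ Finset.univ.erase j, ξ i ^ (if i = j then β i + 1 else β i))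
      = ∏ i ∈ Finset.univ.erase j, ξ i ^ β i :=
    Finset.prod_congr rfl fun i hi => by rw [if_neg (Finset.ne_of_mem_erase hi)]
  rw [herase, if_pos rfl, pow_succ]
  ring

lemma prodB (ξ : V3) (β : Fin 3 → ℕ) (j : Fin 3) :
    ((β j : ℝ)) * ∏ i, ξ i ^ (if i = j then β i - 1 else β i)
      = (∏ i ∈ Finset.univ.erase j, ξ i ^ β i) * ((β j : ℝ) * ξ j ^ (β j - 1)) := by
  rcases Nat.eq_zero_or_pos (β j) with h | h
  · simp [h]
  · rw [← Finset.mul_prod_erase Finset.univ _ (Finset.mem_univ j)]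
    have herase : (∏ i ∈ Finset.univ.erase j, ξ i ^ (if i = j then β i - 1 else β i))
        = ∏ i ∈ Finset.univ.erase j, ξ i ^ β i :=
      Finset.prod_congr rfl fun i hi => by rw [if_neg (Finset.ne_of_mem_erase hi)]
    rw [herase, if_pos rfl]
    ring

/-! ### The derivative computation -/

lemma evalT_hasFDerivAt (N0 : ℝ) (t : MTerm) {δ : ℝ} (hδ : 0 < δ) (ξ : V3) :
    ∃ L : V3 →L[ℝ] ℝ, HasFDerivAt (evalT N0 t δ) L ξ ∧
      ∀ j : Fin 3, L (EuclideanSpace.single j 1) = evalE N0 (dT N0 j t) δ ξ := by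
  have hu : (0:ℝ) < uu ξ := uu_pos ξ
  have hproj : ∀ i : Fin 3, HasFDerivAt (fun ξ : V3 => ξ i)
      (EuclideanSpace.proj (𝕜 := ℝ) i) ξ := fun i =>
    (EuclideanSpace.proj (𝕜 := ℝ) i).hasFDerivAt.congr_of_eventuallyEq
      (Filter.Eventually.of_forall fun x => rfl)
  -- derivative of the monomial
  have hP : HasFDerivAt (fun ξ : V3 => ∏ i, ξ i ^ t.β i)
      (∑ i, (∏ j' ∈ Finset.univ.erase i, ξ j' ^ t.β j') •
        (((t.β i : ℝ) * ξ i ^ (t.β i - 1)) • (EuclideanSpace.proj (𝕜 := ℝ) i))) ξ := by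
    exact HasFDerivAt.finset_prod fun i _ =>
      (hasDerivAt_pow (t.β i) (ξ i)).comp_hasFDerivAt ξ (hproj i)
  -- derivative of uu
  have hU : HasFDerivAt uu (∑ i, ((2 : ℝ) * ξ i) • (EuclideanSpace.proj (𝕜 := ℝ) i)) ξ := by
    have : HasFDerivAt (fun ξ : V3 => ∑ i, ξ i ^ 2)
        (∑ i, ((2 : ℝ) * ξ i) • (EuclideanSpace.proj (𝕜 := ℝ) i)) ξ := by
      refine HasFDerivAt.fun_sum fun i _ => ?_
      have := (hasDerivAt_pow 2 (ξ i)).comp_hasFDerivAt ξ (hproj i)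
      convert this using 1
      · rfl
      · rfl
      · norm_num
    exact this.const_add 1
  have hR : HasFDerivAt (fun ξ => uu ξ ^ t.ν)
      ((t.ν * uu ξ ^ (t.ν - 1)) •
        ∑ i, ((2 : ℝ) * ξ i) • (EuclideanSpace.proj (𝕜 := ℝ) i)) ξ :=
    hU.rpow_const (Or.inl (ne_of_gt hu))
  have hsq : HasFDerivAt (fun ξ => uu ξ ^ ((1:ℝ)/2))
      (((1:ℝ)/2 * uu ξ ^ ((1:ℝ)/2 - 1)) •
        ∑ i, ((2 : ℝ) * ξ i) • (EuclideanSpace.proj (𝕜 := ℝ) i)) ξ :=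
    hU.rpow_const (Or.inl (ne_of_gt hu))
  have hgpos : (0:ℝ) < 1 + δ * uu ξ ^ ((1:ℝ)/2) := by
    have := Real.rpow_pos_of_pos hu ((1:ℝ)/2)
    positivity
  have hg : HasFDerivAt (fun ξ => 1 + δ * uu ξ ^ ((1:ℝ)/2))
      (δ • (((1:ℝ)/2 * uu ξ ^ ((1:ℝ)/2 - 1)) •
        ∑ i, ((2 : ℝ) * ξ i) • (EuclideanSpace.proj (𝕜 := ℝ) i))) ξ :=
    (hsq.const_mul δ).const_add 1
  have hS : HasFDerivAt
      (fun ξ => δ ^ t.k * (1 + δ * uu ξ ^ ((1:ℝ)/2)) ^ (-(N0 + (t.k : ℝ))))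
      ((δ ^ t.k : ℝ) • ((-(N0 + (t.k : ℝ)) * (1 + δ * uu ξ ^ ((1:ℝ)/2)) ^ (-(N0 + (t.k : ℝ)) - 1)) •
        (δ • (((1:ℝ)/2 * uu ξ ^ ((1:ℝ)/2 - 1)) •
          ∑ i, ((2 : ℝ) * ξ i) • (EuclideanSpace.proj (𝕜 := ℝ) i))))) ξ :=
    (hg.rpow_const (Or.inl (ne_of_gt hgpos))).const_mul _
  have hbig := ((hP.const_mul t.c).mul hR).mul hS
  refine ⟨_, hbig.congr_of_eventuallyEq (Filter.Eventually.of_forall fun ζ => rfl), ?_⟩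
  · intro j
    have happ : ∀ i : Fin 3,
        EuclideanSpace.proj (𝕜 := ℝ) i (EuclideanSpace.single j (1:ℝ))
          = if i = j then 1 else 0 := by
      intro i
      rw [PiLp.proj_apply, EuclideanSpace.single_apply]
    have hRHS : evalE N0 (dT N0 j t) δ ξ =
        t.c * (t.β j : ℝ) * (∏ i, ξ i ^ (if i = j then t.β i - 1 else t.β i)) * uu ξ ^ t.ν *
          (δ ^ t.k * (1 + δ * uu ξ ^ ((1:ℝ)/2)) ^ (-(N0 + (t.k : ℝ))))
        + t.c * (2 * t.ν) * (∏ i, ξ i ^ (if i = j then t.β i + 1 else t.β i)) *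
            uu ξ ^ (t.ν - 1) *
          (δ ^ t.k * (1 + δ * uu ξ ^ ((1:ℝ)/2)) ^ (-(N0 + (t.k : ℝ))))
        + t.c * (-(N0 + (t.k : ℝ))) * (∏ i, ξ i ^ (if i = j then t.β i + 1 else t.β i)) *
            uu ξ ^ (t.ν - 1/2) *
          (δ ^ (t.k + 1) *
            (1 + δ * uu ξ ^ ((1:ℝ)/2)) ^ (-(N0 + ((t.k + 1 : ℕ) : ℝ)))) := by
      simp [evalE, dT, evalT]; ring
    rw [hRHS]
    simp only [ContinuousLinearMap.add_apply, ContinuousLinearMap.coe_smul', Pi.smul_apply,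
      ContinuousLinearMap.coe_sum', Finset.sum_apply, happ, smul_eq_mul, mul_ite, mul_one,
      mul_zero, Finset.sum_ite_eq', Finset.mem_univ, if_true, Pi.mul_apply]
    -- abbreviations
    set u := uu ξ with hu_def
    set B := u ^ ((1:ℝ)/2) with hB_def
    set g := 1 + δ * B with hg_def
    have hBpos : 0 < B := Real.rpow_pos_of_pos hu _
    have hgpos' : 0 < g := by positivity
    have e1 : u ^ (t.ν - 1) = u ^ t.ν / u := by
      rw [Real.rpow_sub hu, Real.rpow_one]
    have e2 : u ^ (t.ν - 1/2) = u ^ t.ν * B / u := by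
      rw [show t.ν - 1/2 = t.ν + 1/2 - 1 by ring, Real.rpow_sub hu, Real.rpow_add hu,
        Real.rpow_one, hB_def]
    have e3 : u ^ ((1:ℝ)/2 - 1) = B / u := by
      rw [Real.rpow_sub hu, Real.rpow_one, hB_def]
    have e4 : g ^ (-(N0 + (t.k : ℝ)) - 1) = g ^ (-(N0 + (t.k : ℝ))) / g := by
      rw [Real.rpow_sub hgpos', Real.rpow_one]
    have e5 : g ^ (-(N0 + ((t.k + 1 : ℕ) : ℝ))) = g ^ (-(N0 + (t.k : ℝ))) / g := by
      rw [show -(N0 + ((t.k + 1 : ℕ) : ℝ)) = -(N0 + (t.k : ℝ)) - 1 by push_cast; ring,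
        Real.rpow_sub hgpos', Real.rpow_one]
    have pB := prodB ξ t.β j
    have pA := prodA ξ t.β j
    rw [e1, e2, e3, e4, e5, pA]
    rw [show t.c * (t.β j : ℝ) * (∏ i, ξ i ^ (if i = j then t.β i - 1 else t.β i))
        = t.c * ((∏ i ∈ Finset.univ.erase j, ξ i ^ t.β i) * ((t.β j : ℝ) * ξ j ^ (t.β j - 1)))
        by rw [← pB]; ring]
    have hune : u ≠ 0 := ne_of_gt hu
    have hgne : g ≠ 0 := ne_of_gt hgpos'
    field_simp
    ring

lemma pd_evalT (N0 : ℝ) (t : MTerm) {δ : ℝ} (hδ : 0 < δ) (j : Fin 3) (ξ : V3) :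
    pd j (evalT N0 t δ) ξ = evalE N0 (dT N0 j t) δ ξ := by
  obtain ⟨L, hL, he⟩ := evalT_hasFDerivAt N0 t hδ ξ
  rw [pd, hL.fderiv]; exact he j

lemma evalT_differentiable (N0 : ℝ) (t : MTerm) {δ : ℝ} (hδ : 0 < δ) (ξ : V3) :
    DifferentiableAt ℝ (evalT N0 t δ) ξ := by
  obtain ⟨L, hL, _⟩ := evalT_hasFDerivAt N0 t hδ ξ
  exact hL.differentiableAt

lemma evalE_differentiable (N0 : ℝ) (E : List MTerm) {δ : ℝ} (hδ : 0 < δ) (ξ : V3) :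
    DifferentiableAt ℝ (evalE N0 E δ) ξ := by
  induction E with
  | nil => simpa [evalE] using differentiableAt_const (0:ℝ)
  | cons t E ih =>
    have : evalE N0 (t :: E) δ = fun ξ => evalT N0 t δ ξ + evalE N0 E δ ξ := rfl
    rw [this]
    exact (evalT_differentiable N0 t hδ ξ).add ih

lemma pd_evalE (N0 : ℝ) (E : List MTerm) {δ : ℝ} (hδ : 0 < δ) (j : Fin 3) (ξ : V3) :
    pd j (evalE N0 E δ) ξ = evalE N0 (dE N0 j E) δ ξ := by
  induction E with
  | nil =>
    have : evalE N0 ([] : List MTerm) δ = fun _ => (0:ℝ) := rfl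
    simp [this, dE, pd, evalE]
  | cons t E ih =>
    have h1 : evalE N0 (t :: E) δ = fun ξ => evalT N0 t δ ξ + evalE N0 E δ ξ := rfl
    have h2 : pd j (evalE N0 (t :: E) δ) ξ
        = pd j (evalT N0 t δ) ξ + pd j (evalE N0 E δ) ξ := by
      rw [h1, pd]
      rw [fderiv_fun_add (evalT_differentiable N0 t hδ ξ) (evalE_differentiable N0 E hδ ξ)]
      rfl
    rw [h2, pd_evalT N0 t hδ j ξ, ih]
    have : ∀ E₁ E₂ : List MTerm, evalE N0 (E₁ ++ E₂) δ ξ = evalE N0 E₁ δ ξ + evalE N0 E₂ δ ξ := by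
      intro E₁ E₂
      induction E₁ with
      | nil => simp [evalE]
      | cons a E₁ ih1 => simp [evalE, ih1]; ring
    rw [dE, this]

lemma Msym_eq_evalE (lam N0 : ℝ) {δ : ℝ} (hδ : 0 < δ) :
    Msym lam N0 δ = evalE N0 (iterE lam N0 []) δ := by
  funext ξ
  have hu := uu_pos ξ
  have hj := jpn_pos ξ
  have hgpos : (0:ℝ) < 1 + δ * jpn ξ := by positivity
  rw [Msym, iterE]
  simp only [evalE, evalT, add_zero]
  rw [jpn_eq] at hgpos ⊢
  have h1 : (uu ξ ^ ((1:ℝ)/2)) ^ lam = uu ξ ^ (lam/2) := by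
    rw [← Real.rpow_mul (le_of_lt hu), show (1:ℝ)/2 * lam = lam/2 by ring]
  have h2 : (1 + δ * uu ξ ^ ((1:ℝ)/2)) ^ (-(N0 + ((0:ℕ) : ℝ)))
      = ((1 + δ * uu ξ ^ ((1:ℝ)/2)) ^ N0)⁻¹ := by
    rw [Nat.cast_zero, add_zero, Real.rpow_neg (le_of_lt hgpos)]
  rw [h1, h2]
  simp [div_eq_mul_inv]

lemma pdMulti_eq (lam N0 : ℝ) {δ : ℝ} (hδ : 0 < δ) (l : List (Fin 3)) :
    pdMulti l (Msym lam N0 δ) = evalE N0 (iterE lam N0 l) δ := by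
  induction l with
  | nil => exact Msym_eq_evalE lam N0 hδ
  | cons j l ih =>
    show pd j (pdMulti l (Msym lam N0 δ)) = _
    rw [ih, iterE]
    funext ξ
    exact pd_evalE N0 (iterE lam N0 l) hδ j ξ

/-! ### Bounds -/

def wt (t : MTerm) : ℝ := (∑ i, (t.β i : ℝ)) + 2 * t.ν - t.k

lemma coord_abs_le (ξ : V3) (i : Fin 3) : |ξ i| ≤ jpn ξ := by
  have h1 : (ξ i)^2 ≤ ∑ i', ξ i' ^ 2 :=
    Finset.single_le_sum (fun i' _ => sq_nonneg (ξ i')) (Finset.mem_univ i)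
  have h2 : (ξ i)^2 ≤ uu ξ := by have := uu_pos ξ; unfold uu at *; nlinarith [sq_nonneg (ξ i)]
  rw [jpn_eq]
  calc |ξ i| = ((ξ i)^2) ^ ((1:ℝ)/2) := by
        rw [← Real.sqrt_eq_rpow, Real.sqrt_sq_eq_abs]
  _ ≤ uu ξ ^ ((1:ℝ)/2) := Real.rpow_le_rpow (sq_nonneg _) h2 (by norm_num)

lemma evalT_bound (lam N0 : ℝ) (t : MTerm) {δ : ℝ} (hδ : 0 < δ) (ξ : V3) :
    |evalT N0 t δ ξ| ≤ |t.c| * Msym lam N0 δ ξ * jpn ξ ^ (wt t - lam) := by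
  have hu := uu_pos ξ
  have hj := jpn_pos ξ
  have hgpos : (0:ℝ) < 1 + δ * jpn ξ := by positivity
  have hBeq : uu ξ ^ ((1:ℝ)/2) = jpn ξ := (jpn_eq ξ).symm
  -- bound for the monomial
  have hmono : |∏ i, ξ i ^ t.β i| ≤ jpn ξ ^ ((∑ i, (t.β i : ℝ))) := by
    have h3 : (∏ i, jpn ξ ^ t.β i) = jpn ξ ^ ((∑ i, (t.β i : ℝ))) := by
      rw [Finset.prod_pow_eq_pow_sum, ← Real.rpow_natCast (jpn ξ), Nat.cast_sum]
    calc |∏ i, ξ i ^ t.β i| = ∏ i, |ξ i| ^ t.β i := by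
          rw [Finset.abs_prod]
          exact Finset.prod_congr rfl fun i _ => abs_pow _ _
    _ ≤ ∏ i, jpn ξ ^ t.β i :=
          Finset.prod_le_prod (fun i _ => by positivity) fun i _ =>
            pow_le_pow_left₀ (abs_nonneg _) (coord_abs_le ξ i) _
    _ = jpn ξ ^ ((∑ i, (t.β i : ℝ))) := h3
  -- the u power
  have hupow : uu ξ ^ t.ν = jpn ξ ^ (2 * t.ν) := by
    rw [jpn_eq, ← Real.rpow_mul (le_of_lt hu)]
    congr 1
    ring
  -- the mollifier part
  have hmoll : δ ^ t.k * (1 + δ * jpn ξ) ^ (-(N0 + (t.k : ℝ)))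
      ≤ jpn ξ ^ (-(t.k : ℝ)) * (1 + δ * jpn ξ) ^ (-N0) := by
    have hsp : (1 + δ * jpn ξ) ^ (-(N0 + (t.k : ℝ)))
        = (1 + δ * jpn ξ) ^ (-N0) * (1 + δ * jpn ξ) ^ (-(t.k : ℝ)) := by
      rw [← Real.rpow_add hgpos]; congr 1; ring
    rw [hsp]
    have hkey : δ ^ t.k * (1 + δ * jpn ξ) ^ (-(t.k : ℝ)) ≤ jpn ξ ^ (-(t.k : ℝ)) := by
      have hratio : δ * (1 + δ * jpn ξ)⁻¹ ≤ (jpn ξ)⁻¹ := by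
        rw [← div_eq_mul_inv, show (jpn ξ)⁻¹ = 1 / jpn ξ by rw [one_div],
          div_le_div_iff₀ hgpos hj]
        nlinarith
      have hgk : (1 + δ * jpn ξ) ^ (-(t.k : ℝ)) = (((1 + δ * jpn ξ) ^ t.k)⁻¹ : ℝ) := by
        rw [Real.rpow_neg (le_of_lt hgpos), Real.rpow_natCast]
      have hjk : jpn ξ ^ (-(t.k : ℝ)) = (((jpn ξ) ^ t.k)⁻¹ : ℝ) := by
        rw [Real.rpow_neg (le_of_lt hj), Real.rpow_natCast]
      rw [hgk, hjk, ← inv_pow, ← inv_pow, ← mul_pow]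
      exact pow_le_pow_left₀ (by positivity) hratio _
    calc δ ^ t.k * ((1 + δ * jpn ξ) ^ (-N0) * (1 + δ * jpn ξ) ^ (-(t.k : ℝ)))
        = (δ ^ t.k * (1 + δ * jpn ξ) ^ (-(t.k : ℝ))) * (1 + δ * jpn ξ) ^ (-N0) := by ring
    _ ≤ jpn ξ ^ (-(t.k : ℝ)) * (1 + δ * jpn ξ) ^ (-N0) := by
        refine mul_le_mul_of_nonneg_right hkey (by positivity)
  -- Msym expression
  have hM : Msym lam N0 δ ξ = jpn ξ ^ lam * (1 + δ * jpn ξ) ^ (-N0) := by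
    rw [Msym, Real.rpow_neg (le_of_lt hgpos), div_eq_mul_inv]
  -- combine
  have habs : |evalT N0 t δ ξ|
      = |t.c| * |∏ i, ξ i ^ t.β i| * uu ξ ^ t.ν *
        (δ ^ t.k * (1 + δ * jpn ξ) ^ (-(N0 + (t.k : ℝ)))) := by
    rw [evalT, hBeq]
    rw [abs_mul, abs_mul, abs_mul]
    congr 2
    · rw [abs_of_nonneg (Real.rpow_nonneg (le_of_lt hu) _)]
    · rw [abs_of_nonneg (by positivity)]
  rw [habs]
  have step1 : |t.c| * |∏ i, ξ i ^ t.β i| * uu ξ ^ t.ν *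
        (δ ^ t.k * (1 + δ * jpn ξ) ^ (-(N0 + (t.k : ℝ))))
      ≤ |t.c| * (jpn ξ ^ ((∑ i, (t.β i : ℝ)))) * (jpn ξ ^ (2 * t.ν)) *
        (jpn ξ ^ (-(t.k : ℝ)) * (1 + δ * jpn ξ) ^ (-N0)) := by
    have h1 : (0:ℝ) ≤ uu ξ ^ t.ν := Real.rpow_nonneg (le_of_lt hu) _
    have h2 : (0:ℝ) ≤ δ ^ t.k * (1 + δ * jpn ξ) ^ (-(N0 + (t.k : ℝ))) := by positivity
    have := mul_le_mul
      (mul_le_mul (mul_le_mul_of_nonneg_left hmono (abs_nonneg t.c))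
        (le_of_eq hupow) h1 (by positivity))
      hmoll h2 (by positivity)
    exact this
  refine le_trans step1 (le_of_eq ?_)
  rw [hM]
  have hcollect : jpn ξ ^ (∑ i, (t.β i : ℝ)) * jpn ξ ^ (2 * t.ν) * jpn ξ ^ (-(t.k : ℝ))
      = jpn ξ ^ lam * jpn ξ ^ (wt t - lam) := by
    rw [← Real.rpow_add hj, ← Real.rpow_add hj, ← Real.rpow_add hj]
    congr 1
    rw [wt]; ring
  calc (|t.c| * jpn ξ ^ (∑ i, (t.β i : ℝ))) * jpn ξ ^ (2 * t.ν) *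
        (jpn ξ ^ (-(t.k : ℝ)) * (1 + δ * jpn ξ) ^ (-N0))
      = |t.c| * (jpn ξ ^ (∑ i, (t.β i : ℝ)) * jpn ξ ^ (2 * t.ν) * jpn ξ ^ (-(t.k : ℝ))) *
        (1 + δ * jpn ξ) ^ (-N0) := by ring
  _ = |t.c| * (jpn ξ ^ lam * (1 + δ * jpn ξ) ^ (-N0)) * jpn ξ ^ (wt t - lam) := by
        rw [hcollect]; ring

/-! ### Weight bookkeeping -/

def Good (w : ℝ) (t : MTerm) : Prop := t.c = 0 ∨ wt t = w

lemma sum_ite_beta (β : Fin 3 → ℕ) (j : Fin 3) :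
    (∑ i, ((if i = j then β i + 1 else β i : ℕ) : ℝ)) = (∑ i, (β i : ℝ)) + 1 := by
  have h : ∀ i : Fin 3, ((if i = j then β i + 1 else β i : ℕ) : ℝ)
      = (β i : ℝ) + (if i = j then 1 else 0) := by
    intro i; split_ifs with h <;> simp
  rw [Finset.sum_congr rfl fun i _ => h i, Finset.sum_add_distrib]
  simp

lemma good_dT (lam N0 : ℝ) (j : Fin 3) (t : MTerm) (w : ℝ) (h : Good w t) :
    ∀ t' ∈ dT N0 j t, Good (w - 1) t' := by
  intro t' ht'
  rcases h with hc | hw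
  · refine Or.inl ?_
    simp only [dT, List.mem_cons, List.not_mem_nil, or_false] at ht'
    rcases ht' with rfl | rfl | rfl <;> simp [hc]
  · simp only [dT, List.mem_cons, List.not_mem_nil, or_false] at ht'
    rcases ht' with rfl | rfl | rfl
    · -- first term
      rcases Nat.eq_zero_or_pos (t.β j) with h0 | h0
      · exact Or.inl (by simp [h0])
      · refine Or.inr ?_
        rw [wt] at hw ⊢
        simp only
        have hterm : ∀ i : Fin 3, ((if i = j then t.β i - 1 else t.β i : ℕ) : ℝ)
            = (t.β i : ℝ) - if i = j then 1 else 0 := by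
          intro i
          split_ifs with h
          · subst h
            have h1 : 1 ≤ t.β i := h0
            push_cast [h1]
            ring
          · simp
        have hs : (∑ i, ((if i = j then t.β i - 1 else t.β i : ℕ) : ℝ))
            = (∑ i, (t.β i : ℝ)) - 1 := by
          rw [Finset.sum_congr rfl fun i _ => hterm i, Finset.sum_sub_distrib]
          simp
        rw [hs]
        linarith
    · refine Or.inr ?_
      rw [wt] at hw ⊢
      simp only
      rw [sum_ite_beta]
      linarith
    · refine Or.inr ?_
      rw [wt] at hw ⊢
      simp only
      rw [sum_ite_beta]
      push_cast
      linarith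

lemma good_dE (lam N0 : ℝ) (j : Fin 3) (E : List MTerm) (w : ℝ)
    (h : ∀ t ∈ E, Good w t) : ∀ t' ∈ dE N0 j E, Good (w - 1) t' := by
  induction E with
  | nil => intro t' ht'; exact absurd ht' List.not_mem_nil
  | cons t E ih =>
    intro t' ht'
    rw [dE] at ht'
    rcases List.mem_append.mp ht' with h1 | h2
    · exact good_dT lam N0 j t w (h t List.mem_cons_self) t' h1
    · exact ih (fun s hs => h s (List.mem_cons_of_mem t hs)) t' h2

lemma good_iterE (lam N0 : ℝ) (l : List (Fin 3)) :
    ∀ t ∈ iterE lam N0 l, Good (lam - l.length) t := by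
  induction l with
  | nil =>
    intro t ht
    rw [iterE] at ht
    simp only [List.mem_singleton] at ht
    subst ht
    refine Or.inr ?_
    norm_num [wt]
    ring
  | cons j l ih =>
    intro t ht
    rw [iterE] at ht
    have h := good_dE lam N0 j (iterE lam N0 l) (lam - l.length) ih t ht
    have heq : lam - (((j :: l).length : ℕ) : ℝ) = lam - (l.length : ℝ) - 1 := by
      simp [List.length_cons]
      ring
    rw [heq]
    exact h

/-! ### Final assembly -/

def csum : List MTerm → ℝ
  | [] => 0
  | t :: E => |t.c| + csum E

lemma csum_nonneg (E : List MTerm) : 0 ≤ csum E := by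
  induction E with
  | nil => simp [csum]
  | cons t E ih => rw [csum]; positivity

lemma evalE_bound (lam N0 : ℝ) (E : List MTerm) (w : ℝ) (hE : ∀ t ∈ E, Good w t)
    {δ : ℝ} (hδ : 0 < δ) (ξ : V3) :
    |evalE N0 E δ ξ| ≤ csum E * Msym lam N0 δ ξ * jpn ξ ^ (w - lam) := by
  revert hE
  have hMpos : 0 < Msym lam N0 δ ξ := by
    rw [Msym]
    have hj := jpn_pos ξ
    have : (0:ℝ) < 1 + δ * jpn ξ := by positivity
    positivity
  have hjp : (0:ℝ) < jpn ξ ^ (w - lam) := Real.rpow_pos_of_pos (jpn_pos ξ) _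
  induction E with
  | nil => intro _; norm_num [evalE, csum]
  | cons t E ih =>
    intro hE
    have hterm : |evalT N0 t δ ξ| ≤ |t.c| * Msym lam N0 δ ξ * jpn ξ ^ (w - lam) := by
      rcases hE t List.mem_cons_self with hc | hw
      · rw [show evalT N0 t δ ξ = 0 by rw [evalT, hc]; ring]
        simp [hc]
      · rw [← hw]
        exact evalT_bound lam N0 t hδ ξ
    have hrest := ih (fun s hs => hE s (List.mem_cons_of_mem t hs))
    calc |evalE N0 (t :: E) δ ξ| = |evalT N0 t δ ξ + evalE N0 E δ ξ| := rfl
    _ ≤ |evalT N0 t δ ξ| + |evalE N0 E δ ξ| := abs_add_le _ _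
    _ ≤ |t.c| * Msym lam N0 δ ξ * jpn ξ ^ (w - lam)
        + csum E * Msym lam N0 δ ξ * jpn ξ ^ (w - lam) := add_le_add hterm hrest
    _ = csum (t :: E) * Msym lam N0 δ ξ * jpn ξ ^ (w - lam) := by rw [csum]; ring



/-- symbol estimates |∂^α M_λ^δ(ξ)| ≤ C_α M_λ^δ(ξ) ⟨ξ⟩^{−|α|},
    uniformly in δ ∈ (0,1]. -/
theorem Msym_derivative_bound (lam N0 : ℝ) (l : List (Fin 3)) :
    ∃ C > (0:ℝ), ∀ δ ∈ Set.Ioc (0:ℝ) 1, ∀ ξ : V3,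
      |pdMulti l (Msym lam N0 δ) ξ| ≤
        C * Msym lam N0 δ ξ * jpn ξ ^ (-(l.length : ℝ)) := by
  refine ⟨csum (iterE lam N0 l) + 1, by have := csum_nonneg (iterE lam N0 l); linarith, ?_⟩
  intro δ hδ ξ
  have hδ0 : 0 < δ := hδ.1
  rw [pdMulti_eq lam N0 hδ0 l]
  have hb := evalE_bound lam N0 (iterE lam N0 l) (lam - l.length)
    (good_iterE lam N0 l) hδ0 ξ
  rw [show lam - (l.length : ℝ) - lam = -(l.length : ℝ) by ring] at hb
  refine le_trans hb ?_
  have hMpos : 0 < Msym lam N0 δ ξ := by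
    rw [Msym]
    have hj := jpn_pos ξ
    have : (0:ℝ) < 1 + δ * jpn ξ := by positivity
    positivity
  have hjp : (0:ℝ) < jpn ξ ^ (-(l.length : ℝ)) := Real.rpow_pos_of_pos (jpn_pos ξ) _
  nlinarith [csum_nonneg (iterE lam N0 l)]


end
end
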